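/- arXiv:2402.15086 — 2 statements merged into one kernel-verified Lean document; each statement's English description precedes it below -/
import Mathlib

section
/- With instrument selection, the numerator of the dIVW estimator satisfies E[θ̂_{1,λ}] = β₀ θ_{2,λ}, i.e. E[Σ_{j=1}^p σ_{Γ,j}^{-2} γ̂_j Γ̂_j s_j] = β₀ Σ_{j=1}^p σ_{Γ,j}^{-2} γ_j² q_j. -/
open MeasureTheory ProbabilityTheory

open scoped NNReal ENNReal

lemma aux_integrable_pdf_mul (v : ℝ≥0) (hv : v ≠ 0) :
    Integrable (fun x => gaussianPDFReal 0 v x * x) (volume : Measure ℝ) := by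
  have hv' : 0 < (v : ℝ) := lt_of_le_of_ne v.coe_nonneg (by exact_mod_cast (Ne.symm hv))
  have hb : 0 < (2 * (v:ℝ))⁻¹ := by positivity
  have h := (integrable_mul_exp_neg_mul_sq hb).const_mul (Real.sqrt (2 * Real.pi * v))⁻¹
  refine h.congr (Filter.Eventually.of_forall fun x => ?_)
  simp only [gaussianPDFReal, sub_zero]
  rw [mul_comm (((Real.sqrt (2 * Real.pi * v))⁻¹ * Real.exp (-x ^ 2 / (2 * v)))) x]
  ring_nf

lemma aux_integral_pdf_mul_zero (v : ℝ≥0) :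
    ∫ x, gaussianPDFReal 0 v x * x = 0 := by
  by_cases hv : v = 0
  · simp [hv, gaussianPDFReal_zero_var]
  have heven : ∀ x : ℝ, gaussianPDFReal 0 v (-x) = gaussianPDFReal 0 v x := by
    intro x; simp [gaussianPDFReal]
  set g : ℝ → ℝ := fun x => gaussianPDFReal 0 v x * x with hg
  have hneg : ∀ x, g (-x) = - g x := by
    intro x; simp only [g, heven]; ring
  have hmp : MeasurePreserving (fun x : ℝ => -x) volume volume :=
    Measure.measurePreserving_neg _
  have hemb : MeasurableEmbedding (fun x : ℝ => -x) :=
    (Homeomorph.neg ℝ).measurableEmbedding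
  have h1 : ∫ x, g (-x) = ∫ x, g x := hmp.integral_comp hemb g
  have h2 : ∫ x, g (-x) = - ∫ x, g x := by
    simp_rw [hneg]; exact integral_neg g
  linarith [h1.symm.trans h2]

lemma aux_integrable_id_gaussianReal0 (v : ℝ≥0) (hv : v ≠ 0) :
    Integrable id (gaussianReal 0 v) := by
  rw [gaussianReal_of_var_ne_zero 0 hv]
  rw [integrable_withDensity_iff_integrable_smul' (measurable_gaussianPDF 0 v)
    (Filter.Eventually.of_forall fun x => ENNReal.ofReal_lt_top)]
  refine (aux_integrable_pdf_mul v hv).congr (Filter.Eventually.of_forall fun x => ?_)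
  simp [gaussianPDF, ENNReal.toReal_ofReal (gaussianPDFReal_nonneg 0 v x), smul_eq_mul]

lemma aux_integral_id_gaussianReal0 (v : ℝ≥0) (hv : v ≠ 0) :
    ∫ x, x ∂(gaussianReal 0 v) = 0 := by
  rw [gaussianReal_of_var_ne_zero 0 hv]
  have hm : Measurable fun x : ℝ => (gaussianPDFReal 0 v x).toNNReal :=
    (measurable_gaussianPDFReal 0 v).real_toNNReal
  have hd : (volume : Measure ℝ).withDensity (gaussianPDF 0 v)
      = (volume : Measure ℝ).withDensity (fun x => ((gaussianPDFReal 0 v x).toNNReal : ℝ≥0∞)) := rfl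
  rw [hd]
  rw [show (∫ x, x ∂((volume : Measure ℝ).withDensity
      (fun x => ((gaussianPDFReal 0 v x).toNNReal : ℝ≥0∞)))) = ∫ x, id x ∂((volume : Measure ℝ).withDensity
      (fun x => ((gaussianPDFReal 0 v x).toNNReal : ℝ≥0∞))) from rfl]
  rw [integral_withDensity_eq_integral_smul hm id]
  have heq : (∫ x, (gaussianPDFReal 0 v x).toNNReal • id x)
      = ∫ x, gaussianPDFReal 0 v x * x := by
    congr 1; funext x
    simp [NNReal.smul_def, Real.coe_toNNReal _ (gaussianPDFReal_nonneg 0 v x)]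
  rw [heq, aux_integral_pdf_mul_zero v]

lemma aux_map_add : ∀ (μ : ℝ) (v : ℝ≥0),
    (gaussianReal 0 v).map (· + μ) = gaussianReal μ v := by
  intro μ v
  simpa using gaussianReal_map_add_const (μ := 0) (v := v) μ

lemma aux_integrable_id_gaussianReal (μ : ℝ) (v : ℝ≥0) (hv : v ≠ 0) :
    Integrable id (gaussianReal μ v) := by
  rw [← aux_map_add μ v]
  rw [integrable_map_measure aestronglyMeasurable_id (measurable_id'.add_const μ).aemeasurable]
  exact (aux_integrable_id_gaussianReal0 v hv).add (integrable_const μ)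

lemma aux_integral_id_gaussianReal (μ : ℝ) (v : ℝ≥0) (hv : v ≠ 0) :
    ∫ x, x ∂(gaussianReal μ v) = μ := by
  rw [← aux_map_add μ v]
  rw [show (∫ x, x ∂(gaussianReal 0 v).map (· + μ))
      = ∫ x, id x ∂(gaussianReal 0 v).map (· + μ) from rfl]
  rw [integral_map (measurable_id'.add_const μ).aemeasurable aestronglyMeasurable_id]
  have : ∫ x, (x + μ) ∂(gaussianReal 0 v)
      = (∫ x, x ∂(gaussianReal 0 v)) + ∫ _, μ ∂(gaussianReal 0 v) :=
    integral_add (aux_integrable_id_gaussianReal0 v hv) (integrable_const μ)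
  simp only [id] at this ⊢
  rw [this, aux_integral_id_gaussianReal0 v hv, integral_const]
  simp

lemma aux_iIndepFun_congr {ι Ω : Type*} [Countable ι] {mΩ : MeasurableSpace Ω} {μ : Measure Ω}
    {β : ι → Type*} [m : ∀ i, MeasurableSpace (β i)] {f g : ∀ i, Ω → β i}
    (h : iIndepFun f μ) (hfg : ∀ i, f i =ᵐ[μ] g i) : iIndepFun g μ := by
  rw [iIndepFun_iff_measure_inter_preimage_eq_mul] at h ⊢
  intro S sets H
  have hae : ∀ᵐ ω ∂μ, ∀ i ∈ S, f i ω = g i ω :=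
    (MeasureTheory.ae_ball_iff S.countable_toSet).2 fun i _ => hfg i
  have h1 : μ (⋂ i ∈ S, g i ⁻¹' sets i) = μ (⋂ i ∈ S, f i ⁻¹' sets i) := by
    refine measure_congr (hae.mono fun ω hω => ?_)
    rw [eq_iff_iff]
    show ω ∈ ⋂ i ∈ S, g i ⁻¹' sets i ↔ ω ∈ ⋂ i ∈ S, f i ⁻¹' sets i
    simp only [Set.mem_iInter, Set.mem_preimage]
    exact forall₂_congr fun i hi => by rw [hω i hi]
  have h2 : ∀ i ∈ S, μ (g i ⁻¹' sets i) = μ (f i ⁻¹' sets i) := by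
    intro i hi
    refine measure_congr ((hfg i).mono fun ω hω => ?_)
    rw [eq_iff_iff]
    show g i ω ∈ sets i ↔ f i ω ∈ sets i
    rw [hω]
  rw [h1, h S H]
  exact (Finset.prod_congr rfl h2).symm


/-- with instrument selection, the numerator of the dIVW estimator
satisfies `E[θ̂₁λ] = β₀ θ₂λ`, i.e.
`E[∑ j, σΓ j ⁻² γ̂ j Γ̂ j s j] = β₀ ∑ j, σΓ j ⁻² γ j ² q j`. -/
theorem selected_numerator_expectation
{Ω : Type*} [MeasureSpace Ω] [IsProbabilityMeasure (ℙ : Measure Ω)]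
    (p : ℕ) (hp : 1 ≤ p) (γ : Fin p → ℝ) (β₀ : ℝ) (lam : ℝ) (hlam : 0 ≤ lam)
    (σγ σΓ σstar : Fin p → ℝ)
    (hσγ : ∀ j, 0 < σγ j) (hσΓ : ∀ j, 0 < σΓ j) (hσstar : ∀ j, 0 < σstar j)
    (γhat Γhat γstar : Fin p → Ω → ℝ)
    (hindep : iIndepFun
      (Sum.elim γhat (Sum.elim Γhat γstar) : Fin p ⊕ (Fin p ⊕ Fin p) → Ω → ℝ) ℙ)
    (hγ : ∀ j, Measure.map (γhat j) ℙ = gaussianReal (γ j) ⟨(σγ j) ^ 2, sq_nonneg _⟩)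
    (hΓ : ∀ j, Measure.map (Γhat j) ℙ = gaussianReal (β₀ * γ j) ⟨(σΓ j) ^ 2, sq_nonneg _⟩)
    (hγstar : ∀ j, Measure.map (γstar j) ℙ
      = gaussianReal (γ j) ⟨(σstar j) ^ 2, sq_nonneg _⟩)
    -- selection indicators `s j ω = 1{|γ̂* j| / σ* j > λ}`
    (s : Fin p → Ω → ℝ)
    (hs : ∀ j ω, s j ω = if lam < |γstar j ω| / σstar j then 1 else 0)
    -- selection probabilities `q j = P(|γ̂* j| / σ* j > λ)`
    (q : Fin p → ℝ)
    (hq : ∀ j, q j = (ℙ {ω | lam < |γstar j ω| / σstar j}).toReal) :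
    (∫ ω, ∑ j, ((σΓ j) ^ 2)⁻¹ * (γhat j ω * Γhat j ω) * s j ω ∂ℙ)
      = β₀ * ∑ j, ((σΓ j) ^ 2)⁻¹ * (γ j) ^ 2 * q j := by
  classical
  have hne : ∀ (μm : ℝ) (v : ℝ≥0), gaussianReal μm v ≠ 0 := fun μm v =>
    IsProbabilityMeasure.ne_zero _
  have haeX : ∀ j, AEMeasurable (γhat j) ℙ := fun j => by
    by_contra hc
    exact hne _ _ ((hγ j).symm.trans (Measure.map_of_not_aemeasurable hc))
  have haeY : ∀ j, AEMeasurable (Γhat j) ℙ := fun j => by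
    by_contra hc
    exact hne _ _ ((hΓ j).symm.trans (Measure.map_of_not_aemeasurable hc))
  have haeZ : ∀ j, AEMeasurable (γstar j) ℙ := fun j => by
    by_contra hc
    exact hne _ _ ((hγstar j).symm.trans (Measure.map_of_not_aemeasurable hc))
  set F : Fin p ⊕ (Fin p ⊕ Fin p) → Ω → ℝ := Sum.elim γhat (Sum.elim Γhat γstar) with hFdef
  have haeF : ∀ i, AEMeasurable (F i) ℙ := by
    rintro (j | (j | j))
    · exact haeX j
    · exact haeY j
    · exact haeZ j
  set F' : Fin p ⊕ (Fin p ⊕ Fin p) → Ω → ℝ := fun i => (haeF i).mk (F i) with hF'def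
  have hmeas : ∀ i, Measurable (F' i) := fun i => (haeF i).measurable_mk
  have heq : ∀ i, F i =ᵐ[ℙ] F' i := fun i => (haeF i).ae_eq_mk
  have hindep' : iIndepFun F' ℙ :=
    aux_iIndepFun_congr hindep heq
  -- variance NNReals nonzero
  have hvX : ∀ j, (⟨(σγ j) ^ 2, sq_nonneg _⟩ : ℝ≥0) ≠ 0 := fun j h =>
    pow_ne_zero 2 (hσγ j).ne' (congrArg NNReal.toReal h)
  have hvY : ∀ j, (⟨(σΓ j) ^ 2, sq_nonneg _⟩ : ℝ≥0) ≠ 0 := fun j h =>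
    pow_ne_zero 2 (hσΓ j).ne' (congrArg NNReal.toReal h)
  -- integrability and expectations of γhat, Γhat
  have iX : ∀ j, Integrable (γhat j) ℙ := fun j => by
    have h0 : Integrable id (Measure.map (γhat j) ℙ) := by
      rw [hγ j]; exact aux_integrable_id_gaussianReal _ _ (hvX j)
    simpa [Function.comp] using
      (integrable_map_measure aestronglyMeasurable_id (haeX j)).mp h0
  have iY : ∀ j, Integrable (Γhat j) ℙ := fun j => by
    have h0 : Integrable id (Measure.map (Γhat j) ℙ) := by
      rw [hΓ j]; exact aux_integrable_id_gaussianReal _ _ (hvY j)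
    simpa [Function.comp] using
      (integrable_map_measure aestronglyMeasurable_id (haeY j)).mp h0
  have EX : ∀ j, ∫ ω, γhat j ω ∂ℙ = γ j := fun j => by
    have h0 : ∫ x, id x ∂(Measure.map (γhat j) ℙ) = ∫ ω, γhat j ω ∂ℙ := by
      rw [integral_map (haeX j) aestronglyMeasurable_id]; simp
    rw [← h0, hγ j]
    exact aux_integral_id_gaussianReal _ _ (hvX j)
  have EY : ∀ j, ∫ ω, Γhat j ω ∂ℙ = β₀ * γ j := fun j => by
    have h0 : ∫ x, id x ∂(Measure.map (Γhat j) ℙ) = ∫ ω, Γhat j ω ∂ℙ := by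
      rw [integral_map (haeY j) aestronglyMeasurable_id]; simp
    rw [← h0, hΓ j]
    exact aux_integral_id_gaussianReal _ _ (hvY j)
  -- selection indicator facts
  have key : ∀ j : Fin p,
      Integrable (fun ω => γhat j ω * Γhat j ω * s j ω) ℙ ∧
      ∫ ω, γhat j ω * Γhat j ω * s j ω ∂ℙ = γ j * (β₀ * γ j) * q j := by
    intro j
    set ψ : ℝ → ℝ := fun x => if lam < |x| / σstar j then 1 else 0 with hψdef
    set A : Set ℝ := {x | lam < |x| / σstar j} with hAdef
    have hA : MeasurableSet A :=
      measurableSet_lt measurable_const (measurable_abs.div_const _)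
    have hψm : Measurable ψ := Measurable.ite hA measurable_const measurable_const
    have hsψ : s j = ψ ∘ γstar j := funext fun ω => hs j ω
    have haeS : AEMeasurable (s j) ℙ := by
      rw [hsψ]; exact hψm.comp_aemeasurable (haeZ j)
    have hbound : ∀ ω, ‖s j ω‖ ≤ 1 := fun ω => by
      rw [hs j ω]; split <;> simp
    have iS : Integrable (s j) ℙ :=
      Integrable.mono' (integrable_const 1) haeS.aestronglyMeasurable
        (Filter.Eventually.of_forall hbound)
    have ES : ∫ ω, s j ω ∂ℙ = q j := by
      have h1 : ∫ ω, s j ω ∂ℙ = ∫ x, ψ x ∂(Measure.map (γstar j) ℙ) := by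
        rw [integral_map (haeZ j) hψm.aestronglyMeasurable]
        exact integral_congr_ae (Filter.Eventually.of_forall fun ω => hs j ω)
      have hψi : ψ = A.indicator (fun _ => (1 : ℝ)) := by
        funext x
        by_cases hx : lam < |x| / σstar j <;> simp [ψ, A, Set.indicator, hx]
      have h2 : ∫ x, ψ x ∂(Measure.map (γstar j) ℙ)
          = ((Measure.map (γstar j) ℙ) A).toReal := by
        rw [hψi]; exact integral_indicator_one hA
      have h3 : (Measure.map (γstar j) ℙ) A = ℙ {ω | lam < |γstar j ω| / σstar j} := by
        rw [Measure.map_apply_of_aemeasurable (haeZ j) hA]; rfl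
      rw [h1, h2, h3, hq j]
    -- independence
    have hindXY : IndepFun (γhat j) (Γhat j) ℙ := by
      have h0 : IndepFun (F' (.inl j)) (F' (.inr (.inl j))) ℙ :=
        hindep'.indepFun (by simp)
      exact h0.congr (heq (.inl j)).symm (heq (.inr (.inl j))).symm
    have hpair : IndepFun (fun ω => (γhat j ω, Γhat j ω)) (γstar j) ℙ := by
      have h0 : IndepFun (fun ω => (F' (.inl j) ω, F' (.inr (.inl j)) ω))
          (F' (.inr (.inr j))) ℙ :=
        hindep'.indepFun_prodMk hmeas _ _ _ (by simp) (by simp)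
      refine h0.congr ?_ (heq (.inr (.inr j))).symm
      filter_upwards [heq (.inl j), heq (.inr (.inl j))] with ω h1 h2
      rw [← h1, ← h2]
      rfl
    have hindXY_S : IndepFun (fun ω => γhat j ω * Γhat j ω) (s j) ℙ := by
      rw [hsψ]
      exact hpair.comp (measurable_fst.mul measurable_snd) hψm
    -- integrability and expectation of the product
    have iXY : Integrable (fun ω => γhat j ω * Γhat j ω) ℙ :=
      hindXY.integrable_mul (iX j) (iY j)
    have EXY : ∫ ω, γhat j ω * Γhat j ω ∂ℙ = γ j * (β₀ * γ j) := by
      have h0 := hindXY.integral_fun_mul_eq_mul_integral (iX j).aestronglyMeasurable (iY j).aestronglyMeasurable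
      rw [EX j, EY j] at h0
      exact h0
    have iXYs : Integrable (fun ω => γhat j ω * Γhat j ω * s j ω) ℙ := by
      refine Integrable.mono' iXY.norm
        (AEMeasurable.aestronglyMeasurable (((haeX j).mul (haeY j)).mul haeS))
        (Filter.Eventually.of_forall fun ω => ?_)
      rw [norm_mul]
      exact mul_le_of_le_one_right (norm_nonneg _) (hbound ω)
    have EXYs : ∫ ω, γhat j ω * Γhat j ω * s j ω ∂ℙ = γ j * (β₀ * γ j) * q j := by
      have h0 := hindXY_S.integral_fun_mul_eq_mul_integral iXY.aestronglyMeasurable iS.aestronglyMeasurable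
      rw [EXY, ES] at h0
      exact h0
    exact ⟨iXYs, EXYs⟩
  -- assemble
  have hterm : ∀ j : Fin p,
      ∫ ω, ((σΓ j) ^ 2)⁻¹ * (γhat j ω * Γhat j ω) * s j ω ∂ℙ
        = ((σΓ j) ^ 2)⁻¹ * (γ j * (β₀ * γ j) * q j) := by
    intro j
    rw [show (fun ω => ((σΓ j) ^ 2)⁻¹ * (γhat j ω * Γhat j ω) * s j ω)
        = fun ω => ((σΓ j) ^ 2)⁻¹ * (γhat j ω * Γhat j ω * s j ω) from
      funext fun ω => mul_assoc _ _ _]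
    rw [integral_const_mul, (key j).2]
  have hint : ∀ j : Fin p,
      Integrable (fun ω => ((σΓ j) ^ 2)⁻¹ * (γhat j ω * Γhat j ω) * s j ω) ℙ := by
    intro j
    have := ((key j).1).const_mul (((σΓ j) ^ 2)⁻¹)
    refine this.congr (Filter.Eventually.of_forall fun ω => ?_)
    exact (mul_assoc _ _ _).symm
  rw [integral_finset_sum Finset.univ fun j _ => hint j]
  calc ∑ j, ∫ ω, ((σΓ j) ^ 2)⁻¹ * (γhat j ω * Γhat j ω) * s j ω ∂ℙ
      = ∑ j, ((σΓ j) ^ 2)⁻¹ * (γ j * (β₀ * γ j) * q j) :=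
        Finset.sum_congr rfl fun j _ => hterm j
    _ = β₀ * ∑ j, ((σΓ j) ^ 2)⁻¹ * (γ j) ^ 2 * q j := by
        rw [Finset.mul_sum]
        exact Finset.sum_congr rfl fun j _ => by ring
end

section
/- With instrument selection, the covariance of the numerator and denominator of the dIVW estimator equals Cov(θ̂_{1,λ}, θ̂_{2,λ}) = β₀ Σ_{j=1}^p σ_{Γ,j}^{-4} [ 2 σ_{γ,j}² γ_j² q_j + γ_j⁴ q_j (1 − q_j) ]. -/
open MeasureTheory ProbabilityTheory


open MeasureTheory ProbabilityTheory Real Filter Set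

lemma integrable_pow_mul_exp_neg_mul_sq' {b : ℝ} (hb : 0 < b) (n : ℕ) :
    Integrable fun x : ℝ => x ^ n * Real.exp (-b * x ^ 2) := by
  have := integrable_rpow_mul_exp_neg_mul_sq hb (s := (n : ℝ)) (lt_of_lt_of_le neg_one_lt_zero (Nat.cast_nonneg n))
  simpa [Real.rpow_natCast] using this

lemma integrable_pow_mul_gaussian {b : ℝ} (hb : 0 < b) (c m : ℝ) (n : ℕ) :
    Integrable fun x : ℝ => x ^ n * (c * Real.exp (-b * (x - m) ^ 2)) := by
  have key : Integrable fun y : ℝ => (y + m) ^ n * (c * Real.exp (-b * y ^ 2)) := by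
    have : (fun y : ℝ => (y + m) ^ n * (c * Real.exp (-b * y ^ 2)))
        = fun y => ∑ k ∈ Finset.range (n + 1),
            (m ^ (n - k) * (n.choose k : ℝ) * c) * (y ^ k * Real.exp (-b * y ^ 2)) := by
      funext y
      rw [add_pow, Finset.sum_mul]
      exact Finset.sum_congr rfl fun k _ => by ring
    rw [this]
    exact integrable_finset_sum _ fun k _ =>
      ((integrable_pow_mul_exp_neg_mul_sq' hb k).const_mul _)
  have := key.comp_sub_right m
  simpa using this

section Moments
variable {m σ : ℝ}

/-- pdf in `c * exp (-b (x-m)^2)` form -/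
lemma gaussianPDFReal_eq (hσ : 0 < σ) (x : ℝ) :
    gaussianPDFReal m ⟨σ ^ 2, sq_nonneg σ⟩ x
      = (Real.sqrt (2 * π * σ ^ 2))⁻¹ * Real.exp (-(2 * σ ^ 2)⁻¹ * (x - m) ^ 2) := by
  unfold gaussianPDFReal
  change (Real.sqrt (2 * π * σ ^ 2))⁻¹ * Real.exp (-(x - m) ^ 2 / (2 * σ ^ 2)) = _
  rw [neg_div, div_eq_inv_mul, ← neg_mul]

lemma integrable_pow_mul_gaussianPDFReal (hσ : 0 < σ) (n : ℕ) :
    Integrable fun x : ℝ => x ^ n * gaussianPDFReal m ⟨σ ^ 2, sq_nonneg σ⟩ x := by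
  have : (fun x : ℝ => x ^ n * gaussianPDFReal m ⟨σ ^ 2, sq_nonneg σ⟩ x)
      = fun x => x ^ n * ((Real.sqrt (2 * π * σ ^ 2))⁻¹
          * Real.exp (-(2 * σ ^ 2)⁻¹ * (x - m) ^ 2)) := by
    funext x; rw [gaussianPDFReal_eq hσ]
  rw [this]
  exact integrable_pow_mul_gaussian (by positivity) _ _ n

lemma hasDerivAt_gaussianPDFReal (hσ : 0 < σ) (x : ℝ) :
    HasDerivAt (gaussianPDFReal m ⟨σ ^ 2, sq_nonneg σ⟩)
      (-((x - m) / σ ^ 2) * gaussianPDFReal m ⟨σ ^ 2, sq_nonneg σ⟩ x) x := by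
  have h0 : HasDerivAt (fun x : ℝ => (x - m) ^ 2) (2 * (x - m)) x := by
    simpa using ((hasDerivAt_id x).sub_const m).fun_pow 2
  have h1 := h0.const_mul (-(2 * σ ^ 2)⁻¹)
  have key := (h1.exp).const_mul (Real.sqrt (2 * π * σ ^ 2))⁻¹
  have hfun : gaussianPDFReal m ⟨σ ^ 2, sq_nonneg σ⟩
      = fun x => (Real.sqrt (2 * π * σ ^ 2))⁻¹ * Real.exp (-(2 * σ ^ 2)⁻¹ * (x - m) ^ 2) :=
    funext fun y => gaussianPDFReal_eq hσ y
  rw [hfun]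
  refine key.congr_deriv (Eq.symm ?_)
  show -((x - m) / σ ^ 2) * ((Real.sqrt (2 * π * σ ^ 2))⁻¹
      * Real.exp (-(2 * σ ^ 2)⁻¹ * (x - m) ^ 2)) = _
  have hσ2 : σ ^ 2 ≠ 0 := by positivity
  field_simp

lemma gaussian_moment_rec (hσ : 0 < σ) (n : ℕ) :
    ∫ x, x ^ (n + 1) * gaussianPDFReal m ⟨σ ^ 2, sq_nonneg σ⟩ x
      = m * (∫ x, x ^ n * gaussianPDFReal m ⟨σ ^ 2, sq_nonneg σ⟩ x)
        + σ ^ 2 * n * ∫ x, x ^ (n - 1) * gaussianPDFReal m ⟨σ ^ 2, sq_nonneg σ⟩ x := by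
  set P := gaussianPDFReal m ⟨σ ^ 2, sq_nonneg σ⟩ with hPdef
  have hσ2 : (σ : ℝ) ^ 2 ≠ 0 := by positivity
  have I : ∀ k, Integrable fun x : ℝ => x ^ k * P x := fun k =>
    integrable_pow_mul_gaussianPDFReal hσ k
  have hu : ∀ x : ℝ, HasDerivAt (fun x : ℝ => x ^ n) ((n : ℝ) * x ^ (n - 1)) x := fun x =>
    hasDerivAt_pow n x
  have hv : ∀ x : ℝ, HasDerivAt (fun y => -σ ^ 2 * P y) ((x - m) * P x) x := by
    intro x
    have h := (hasDerivAt_gaussianPDFReal hσ (m := m) x).const_mul (-σ ^ 2)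
    refine h.congr_deriv ?_
    simp only [hPdef]
    field_simp
  have huv' : Integrable ((fun x : ℝ => x ^ n) * fun x => (x - m) * P x) := by
    have : ((fun x : ℝ => x ^ n) * fun x => (x - m) * P x)
        = fun x => x ^ (n + 1) * P x - m * (x ^ n * P x) := by
      funext x; simp only [Pi.mul_apply]; ring
    rw [this]; exact (I (n + 1)).sub ((I n).const_mul m)
  have hu'v : Integrable ((fun x : ℝ => (n : ℝ) * x ^ (n - 1)) * fun x => -σ ^ 2 * P x) := by
    have : ((fun x : ℝ => (n : ℝ) * x ^ (n - 1)) * fun x => -σ ^ 2 * P x)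
        = fun x => (-σ ^ 2 * n) * (x ^ (n - 1) * P x) := by
      funext x; simp only [Pi.mul_apply]; ring
    rw [this]; exact (I (n - 1)).const_mul _
  have huv : Integrable ((fun x : ℝ => x ^ n) * fun x => -σ ^ 2 * P x) := by
    have : ((fun x : ℝ => x ^ n) * fun x => -σ ^ 2 * P x)
        = fun x => (-σ ^ 2) * (x ^ n * P x) := by
      funext x; simp only [Pi.mul_apply]; ring
    rw [this]; exact (I n).const_mul _
  have key := integral_mul_deriv_eq_deriv_mul_of_integrable (fun x _ => hu x) (fun x _ => hv x) huv' hu'v huv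
  have e1 : ∫ x, x ^ n * ((x - m) * P x)
      = (∫ x, x ^ (n + 1) * P x) - m * ∫ x, x ^ n * P x := by
    rw [show (fun x : ℝ => x ^ n * ((x - m) * P x))
        = fun x => x ^ (n + 1) * P x - m * (x ^ n * P x) from funext fun x => by ring]
    rw [integral_sub (I (n + 1)) ((I n).const_mul m), integral_const_mul]
  have e2 : ∫ x, ((n : ℝ) * x ^ (n - 1)) * (-σ ^ 2 * P x)
      = (-σ ^ 2 * n) * ∫ x, x ^ (n - 1) * P x := by
    rw [show (fun x : ℝ => ((n : ℝ) * x ^ (n - 1)) * (-σ ^ 2 * P x))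
        = fun x => (-σ ^ 2 * n) * (x ^ (n - 1) * P x) from funext fun x => by ring]
    rw [integral_const_mul]
  rw [e1, e2] at key
  linear_combination key

lemma gaussian_M0 (hσ : 0 < σ) :
    ∫ x, x ^ 0 * gaussianPDFReal m ⟨σ ^ 2, sq_nonneg σ⟩ x = 1 := by
  have hv : (⟨σ ^ 2, sq_nonneg σ⟩ : NNReal) ≠ 0 := by
    intro h
    have : (σ : ℝ) ^ 2 = 0 := congrArg NNReal.toReal h
    exact (by positivity : (0:ℝ) < σ ^ 2).ne' this
  simpa using integral_gaussianPDFReal_eq_one m hv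

lemma gaussian_M1 (hσ : 0 < σ) :
    ∫ x, x ^ 1 * gaussianPDFReal m ⟨σ ^ 2, sq_nonneg σ⟩ x = m := by
  have h := gaussian_moment_rec (m := m) hσ 0
  rw [show (0:ℕ) + 1 = 1 from rfl, show (0:ℕ) - 1 = 0 from rfl] at h
  rw [h]; simp only [gaussian_M0 hσ]; push_cast; ring

lemma gaussian_M2 (hσ : 0 < σ) :
    ∫ x, x ^ 2 * gaussianPDFReal m ⟨σ ^ 2, sq_nonneg σ⟩ x = m ^ 2 + σ ^ 2 := by
  have h := gaussian_moment_rec (m := m) hσ 1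
  rw [show (1:ℕ) + 1 = 2 from rfl, show (1:ℕ) - 1 = 0 from rfl] at h
  rw [h]; simp only [gaussian_M0 hσ, gaussian_M1 hσ]; push_cast; ring

lemma gaussian_M3 (hσ : 0 < σ) :
    ∫ x, x ^ 3 * gaussianPDFReal m ⟨σ ^ 2, sq_nonneg σ⟩ x = m ^ 3 + 3 * m * σ ^ 2 := by
  have h := gaussian_moment_rec (m := m) hσ 2
  rw [show (2:ℕ) + 1 = 3 from rfl, show (2:ℕ) - 1 = 1 from rfl] at h
  rw [h]; simp only [gaussian_M1 hσ, gaussian_M2 hσ]; push_cast; ring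

end Moments

section RV
variable {m σ : ℝ}

lemma gaussianReal_var_ne_zero (hσ : 0 < σ) : (⟨σ ^ 2, sq_nonneg σ⟩ : NNReal) ≠ 0 := by
  intro h
  have : (σ : ℝ) ^ 2 = 0 := congrArg NNReal.toReal h
  exact (by positivity : (0:ℝ) < σ ^ 2).ne' this

lemma gaussianPDF_eq_coe (m : ℝ) (v : NNReal) :
    gaussianPDF m v = fun x => ((Real.toNNReal (gaussianPDFReal m v x) : NNReal) : ENNReal) :=
  rfl

lemma integral_gaussianReal_eq (hσ : 0 < σ) (g : ℝ → ℝ) :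
    ∫ x, g x ∂(gaussianReal m ⟨σ ^ 2, sq_nonneg σ⟩)
      = ∫ x, g x * gaussianPDFReal m ⟨σ ^ 2, sq_nonneg σ⟩ x := by
  rw [gaussianReal_of_var_ne_zero m (gaussianReal_var_ne_zero hσ)]
  erw [gaussianPDF_eq_coe,
    integral_withDensity_eq_integral_smul ((measurable_gaussianPDFReal _ _).real_toNNReal) g]
  congr 1; funext x
  erw [NNReal.smul_def, smul_eq_mul, Real.coe_toNNReal _ (gaussianPDFReal_nonneg _ _ _), mul_comm]

lemma integrable_gaussianReal_iff (hσ : 0 < σ) (g : ℝ → ℝ) :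
    Integrable g (gaussianReal m ⟨σ ^ 2, sq_nonneg σ⟩)
      ↔ Integrable (fun x => g x * gaussianPDFReal m ⟨σ ^ 2, sq_nonneg σ⟩ x) := by
  rw [gaussianReal_of_var_ne_zero m (gaussianReal_var_ne_zero hσ)]
  erw [gaussianPDF_eq_coe,
    integrable_withDensity_iff_integrable_smul ((measurable_gaussianPDFReal _ _).real_toNNReal)]
  constructor <;> intro h <;> refine h.congr (Filter.Eventually.of_forall fun x => ?_) <;>
    · simp only [NNReal.smul_def, smul_eq_mul]
      erw [Real.coe_toNNReal _ (gaussianPDFReal_nonneg _ _ _)]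
      ring

variable {Ω : Type*} [MeasureSpace Ω] {X : Ω → ℝ}

lemma rv_int_pow (hσ : 0 < σ) (hXae : AEMeasurable X ℙ)
    (hmap : Measure.map X ℙ = gaussianReal m ⟨σ ^ 2, sq_nonneg σ⟩) (n : ℕ) :
    Integrable (fun ω => (X ω) ^ n) ℙ := by
  have hg : Integrable (fun x : ℝ => x ^ n) (gaussianReal m ⟨σ ^ 2, sq_nonneg σ⟩) :=
    (integrable_gaussianReal_iff hσ _).mpr (integrable_pow_mul_gaussianPDFReal hσ n)
  exact (integrable_map_measure
    (by rw [hmap]; exact (measurable_id.pow_const n).aestronglyMeasurable) hXae).mp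
    (by rw [hmap]; exact hg)

lemma rv_integral_pow (hσ : 0 < σ) (hXae : AEMeasurable X ℙ)
    (hmap : Measure.map X ℙ = gaussianReal m ⟨σ ^ 2, sq_nonneg σ⟩) (n : ℕ) :
    ∫ ω, (X ω) ^ n ∂ℙ = ∫ x, x ^ n * gaussianPDFReal m ⟨σ ^ 2, sq_nonneg σ⟩ x := by
  have h1 : ∫ ω, (X ω) ^ n ∂ℙ = ∫ x, x ^ n ∂(Measure.map X ℙ) := by
    rw [integral_map hXae]
    rw [hmap]
    exact (measurable_id.pow_const n).aestronglyMeasurable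
  rw [h1, hmap, integral_gaussianReal_eq hσ]

lemma rv_mean (hσ : 0 < σ) (hXae : AEMeasurable X ℙ)
    (hmap : Measure.map X ℙ = gaussianReal m ⟨σ ^ 2, sq_nonneg σ⟩) :
    ∫ ω, X ω ∂ℙ = m := by
  have h := rv_integral_pow hσ hXae hmap 1
  rw [gaussian_M1 hσ] at h
  simpa using h

lemma rv_m2 (hσ : 0 < σ) (hXae : AEMeasurable X ℙ)
    (hmap : Measure.map X ℙ = gaussianReal m ⟨σ ^ 2, sq_nonneg σ⟩) :
    ∫ ω, (X ω) ^ 2 ∂ℙ = m ^ 2 + σ ^ 2 := by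
  rw [rv_integral_pow hσ hXae hmap 2, gaussian_M2 hσ]

lemma rv_m3 (hσ : 0 < σ) (hXae : AEMeasurable X ℙ)
    (hmap : Measure.map X ℙ = gaussianReal m ⟨σ ^ 2, sq_nonneg σ⟩) :
    ∫ ω, (X ω) ^ 3 ∂ℙ = m ^ 3 + 3 * m * σ ^ 2 := by
  rw [rv_integral_pow hσ hXae hmap 3, gaussian_M3 hσ]

lemma rv_int (hσ : 0 < σ) (hXae : AEMeasurable X ℙ)
    (hmap : Measure.map X ℙ = gaussianReal m ⟨σ ^ 2, sq_nonneg σ⟩) :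
    Integrable X ℙ := by
  have := rv_int_pow hσ hXae hmap 1
  simpa using this

end RV

lemma aemeasurable_of_map_eq_gaussian {Ω : Type*} [MeasureSpace Ω] {f : Ω → ℝ} {m : ℝ} {v : NNReal}
    (h : Measure.map f ℙ = gaussianReal m v) : AEMeasurable f ℙ := by
  by_contra hf
  rw [Measure.map_of_not_aemeasurable hf] at h
  have h1 : (gaussianReal m v) Set.univ = 1 := measure_univ
  rw [← h] at h1
  simp at h1

lemma iIndepFun_congr_ae {ι : Type*} {Ω : Type*} [MeasurableSpace Ω] {μ : Measure Ω}
    {f g : ι → Ω → ℝ} (hf : iIndepFun f μ)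
    (h : ∀ i, f i =ᵐ[μ] g i) : iIndepFun g μ := by
  rw [iIndepFun_iff_measure_inter_preimage_eq_mul] at hf ⊢
  intro S sets hsets
  have hall : ∀ᵐ ω ∂μ, ∀ i ∈ S, f i ω = g i ω := by
    rw [Filter.eventually_all_finset]
    exact fun i _ => h i
  have h1 : (⋂ i ∈ S, f i ⁻¹' sets i) =ᵐ[μ] (⋂ i ∈ S, g i ⁻¹' sets i) := by
    rw [Filter.eventuallyEq_set]
    filter_upwards [hall] with ω hω
    simp only [Set.mem_iInter, Set.mem_preimage]
    exact ⟨fun H i hi => by rw [← hω i hi]; exact H i hi,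
      fun H i hi => by rw [hω i hi]; exact H i hi⟩
  rw [← measure_congr h1, hf S hsets]
  refine Finset.prod_congr rfl fun i hi => measure_congr ?_
  rw [Filter.eventuallyEq_set]
  filter_upwards [h i] with ω hω
  simp only [Set.mem_preimage, hω]

open MeasureTheory ProbabilityTheory Real

lemma meas_aux1 {δ : Type*} (i1 i2 i3 : δ) (c : ℝ) {T : ℝ → ℝ} (hT : Measurable T) :
    Measurable (fun h : δ → ℝ => c * (h i1 * h i2) * T (h i3)) :=
  (((measurable_pi_apply i1).fun_mul (measurable_pi_apply i2)).const_mul c).fun_mul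
    (hT.comp (measurable_pi_apply i3) : Measurable fun h : δ → ℝ => T (h i3))

lemma meas_aux2 {δ : Type*} (i1 i3 : δ) (c d : ℝ) {T : ℝ → ℝ} (hT : Measurable T) :
    Measurable (fun h : δ → ℝ => c * ((h i1) ^ 2 - d) * T (h i3)) :=
  ((((measurable_pi_apply i1).pow_const 2).sub_const d).const_mul c).fun_mul
    (hT.comp (measurable_pi_apply i3) : Measurable fun h : δ → ℝ => T (h i3))

set_option maxHeartbeats 1000000 in
theorem aux_cov {Ω : Type*} [MeasureSpace Ω] [IsProbabilityMeasure (ℙ : Measure Ω)]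
    (p : ℕ) (γ : Fin p → ℝ) (β₀ : ℝ) (lam : ℝ)
    (σγ σΓ σstar : Fin p → ℝ)
    (hσγ : ∀ j, 0 < σγ j) (hσΓ : ∀ j, 0 < σΓ j)
    (X Y W : Fin p → Ω → ℝ)
    (hXm : ∀ j, Measurable (X j)) (hYm : ∀ j, Measurable (Y j)) (hWm : ∀ j, Measurable (W j))
    (hindep : iIndepFun
      (Sum.elim X (Sum.elim Y W) : Fin p ⊕ (Fin p ⊕ Fin p) → Ω → ℝ) ℙ)
    (hX : ∀ j, Measure.map (X j) ℙ = gaussianReal (γ j) ⟨(σγ j) ^ 2, sq_nonneg _⟩)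
    (hY : ∀ j, Measure.map (Y j) ℙ = gaussianReal (β₀ * γ j) ⟨(σΓ j) ^ 2, sq_nonneg _⟩)
    (q : Fin p → ℝ)
    (hq : ∀ j, q j = (ℙ {ω | lam < |W j ω| / σstar j}).toReal) :
    (∫ ω, (∑ j, ((σΓ j) ^ 2)⁻¹ * (X j ω * Y j ω)
          * (if lam < |W j ω| / σstar j then (1:ℝ) else 0))
        * (∑ j, ((σΓ j) ^ 2)⁻¹ * ((X j ω) ^ 2 - (σγ j) ^ 2)
          * (if lam < |W j ω| / σstar j then (1:ℝ) else 0)) ∂ℙ)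
      - (∫ ω, ∑ j, ((σΓ j) ^ 2)⁻¹ * (X j ω * Y j ω)
          * (if lam < |W j ω| / σstar j then (1:ℝ) else 0) ∂ℙ)
        * (∫ ω, ∑ j, ((σΓ j) ^ 2)⁻¹ * ((X j ω) ^ 2 - (σγ j) ^ 2)
          * (if lam < |W j ω| / σstar j then (1:ℝ) else 0) ∂ℙ)
      = β₀ * ∑ j, ((σΓ j) ^ 4)⁻¹ *
          (2 * (σγ j) ^ 2 * (γ j) ^ 2 * q j + (γ j) ^ 4 * q j * (1 - q j)) := by
  classical
  -- notation
  set F : Fin p ⊕ (Fin p ⊕ Fin p) → Ω → ℝ := Sum.elim X (Sum.elim Y W) with hF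
  have hFmeas : ∀ i, Measurable (F i) := by
    rintro (j | j | j)
    · exact hXm j
    · exact hYm j
    · exact hWm j
  set S : Fin p → Ω → ℝ := fun j ω => if lam < |W j ω| / σstar j then 1 else 0 with hSdef
  set A : Fin p → Set Ω := fun j => {ω | lam < |W j ω| / σstar j} with hAdef
  have hA : ∀ j, MeasurableSet (A j) :=
    fun j => measurableSet_lt measurable_const ((hWm j).abs.div_const _)
  have hSind : ∀ j, S j = (A j).indicator (fun _ => (1:ℝ)) := by
    intro j; funext ω
    simp [hSdef, hAdef, Set.indicator_apply, Set.mem_setOf_eq]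
  have hSmeas : ∀ j, Measurable (S j) := by
    intro j; rw [hSind]; exact measurable_const.indicator (hA j)
  have hSint : ∀ j, Integrable (S j) ℙ := by
    intro j; rw [hSind]; exact (integrable_const (1:ℝ)).indicator (hA j)
  have hSval : ∀ j, ∫ ω, S j ω ∂ℙ = q j := by
    intro j
    rw [show (fun ω => S j ω) = (A j).indicator (fun _ => (1:ℝ)) from hSind j]
    rw [integral_indicator_const (1:ℝ) (hA j), hq j, smul_eq_mul, mul_one]
    rfl
  -- the indicator as a function of W j
  set Sf : Fin p → ℝ → ℝ := fun j w => if lam < |w| / σstar j then 1 else 0 with hSfdef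
  have hSfmeas : ∀ j, Measurable (Sf j) := by
    intro j
    have : Sf j = Set.indicator {w : ℝ | lam < |w| / σstar j} (fun _ => (1:ℝ)) := by
      funext w; simp [hSfdef, Set.indicator_apply, Set.mem_setOf_eq]
    rw [this]
    exact measurable_const.indicator (measurableSet_lt measurable_const
      (measurable_abs.div_const _))
  -- gaussian moments
  have hXae : ∀ j, AEMeasurable (X j) ℙ := fun j => (hXm j).aemeasurable
  have hXint1 : ∀ j, Integrable (X j) ℙ := fun j => rv_int (hσγ j) (hXae j) (hX j)
  have hXint2 : ∀ j, Integrable (fun ω => (X j ω) ^ 2) ℙ :=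
    fun j => rv_int_pow (hσγ j) (hXae j) (hX j) 2
  have hXint3 : ∀ j, Integrable (fun ω => (X j ω) ^ 3) ℙ :=
    fun j => rv_int_pow (hσγ j) (hXae j) (hX j) 3
  have hXmean : ∀ j, ∫ ω, X j ω ∂ℙ = γ j := fun j => rv_mean (hσγ j) (hXae j) (hX j)
  have hXm2 : ∀ j, ∫ ω, (X j ω) ^ 2 ∂ℙ = (γ j) ^ 2 + (σγ j) ^ 2 :=
    fun j => rv_m2 (hσγ j) (hXae j) (hX j)
  have hXm3 : ∀ j, ∫ ω, (X j ω) ^ 3 ∂ℙ = (γ j) ^ 3 + 3 * γ j * (σγ j) ^ 2 :=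
    fun j => rv_m3 (hσγ j) (hXae j) (hX j)
  have hYint : ∀ j, Integrable (Y j) ℙ :=
    fun j => rv_int (hσΓ j) ((hYm j).aemeasurable) (hY j)
  have hYmean : ∀ j, ∫ ω, Y j ω ∂ℙ = β₀ * γ j :=
    fun j => rv_mean (hσΓ j) ((hYm j).aemeasurable) (hY j)
  -- independence facts per index j
  have hne1 : ∀ j : Fin p, (Sum.inl j : Fin p ⊕ (Fin p ⊕ Fin p)) ≠ Sum.inr (Sum.inl j) := by simp
  have hne2 : ∀ j : Fin p, (Sum.inl j : Fin p ⊕ (Fin p ⊕ Fin p)) ≠ Sum.inr (Sum.inr j) := by simp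
  have hne3 : ∀ j : Fin p, (Sum.inr (Sum.inl j) : Fin p ⊕ (Fin p ⊕ Fin p))
      ≠ Sum.inr (Sum.inr j) := by simp
  have hIXY : ∀ j, IndepFun (X j) (Y j) ℙ := fun j => hindep.indepFun (hne1 j)
  have hIXW : ∀ j, IndepFun (X j) (W j) ℙ := fun j => hindep.indepFun (hne2 j)
  have hIYW : ∀ j, IndepFun (Y j) (W j) ℙ := fun j => hindep.indepFun (hne3 j)
  have hIXY_W : ∀ j, IndepFun (fun ω => (X j ω, Y j ω)) (W j) ℙ := fun j =>
    hindep.indepFun_prodMk hFmeas (Sum.inl j) (Sum.inr (Sum.inl j)) (Sum.inr (Sum.inr j))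
      (hne2 j) (hne3 j)
  have hIYW_X : ∀ j, IndepFun (fun ω => (Y j ω, W j ω)) (X j) ℙ := fun j =>
    hindep.indepFun_prodMk hFmeas (Sum.inr (Sum.inl j)) (Sum.inr (Sum.inr j)) (Sum.inl j)
      (hne1 j).symm (hne2 j).symm
  -- derived independences
  have hI1 : ∀ j, IndepFun (fun ω => X j ω * Y j ω) (S j) ℙ := by
    intro j
    exact (hIXY_W j).comp (measurable_fst.mul measurable_snd) (hSfmeas j)
  have hI2 : ∀ j, IndepFun (fun ω => (X j ω) ^ 2 - (σγ j) ^ 2) (S j) ℙ := by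
    intro j
    exact (hIXW j).comp ((measurable_id.pow_const 2).sub_const _) (hSfmeas j)
  have hI3 : ∀ j, IndepFun (fun ω => (X j ω) ^ 3 - (σγ j) ^ 2 * X j ω)
      (fun ω => Y j ω * S j ω) ℙ := by
    intro j
    exact (hIYW_X j).symm.comp
      ((measurable_id.pow_const 3).sub (measurable_id.const_mul _))
      (measurable_fst.mul ((hSfmeas j).comp measurable_snd))
  have hI4 : ∀ j, IndepFun (Y j) (S j) ℙ := by
    intro j
    exact (hIYW j).comp measurable_id (hSfmeas j)
  -- integrabilities
  have iXY : ∀ j, Integrable (fun ω => X j ω * Y j ω) ℙ :=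
    fun j => (hIXY j).integrable_mul (hXint1 j) (hYint j)
  have iXYS : ∀ j, Integrable (fun ω => X j ω * Y j ω * S j ω) ℙ :=
    fun j => (hI1 j).integrable_mul (iXY j) (hSint j)
  have iYS : ∀ j, Integrable (fun ω => Y j ω * S j ω) ℙ :=
    fun j => (hI4 j).integrable_mul (hYint j) (hSint j)
  have iX2c : ∀ j, Integrable (fun ω => (X j ω) ^ 2 - (σγ j) ^ 2) ℙ :=
    fun j => (hXint2 j).sub (integrable_const _)
  have iG0 : ∀ j, Integrable (fun ω => ((X j ω) ^ 2 - (σγ j) ^ 2) * S j ω) ℙ :=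
    fun j => (hI2 j).integrable_mul (iX2c j) (hSint j)
  have iU : ∀ j, Integrable (fun ω => (X j ω) ^ 3 - (σγ j) ^ 2 * X j ω) ℙ :=
    fun j => (hXint3 j).sub ((hXint1 j).const_mul _)
  have iUYS : ∀ j, Integrable
      (fun ω => ((X j ω) ^ 3 - (σγ j) ^ 2 * X j ω) * (Y j ω * S j ω)) ℙ :=
    fun j => (hI3 j).integrable_mul (iU j) (iYS j)
  -- expectations
  have EXY : ∀ j, ∫ ω, X j ω * Y j ω ∂ℙ = γ j * (β₀ * γ j) := by
    intro j
    have h := (hIXY j).integral_mul_eq_mul_integral (hXint1 j).1 (hYint j).1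
    rw [show (X j * Y j) = fun ω => X j ω * Y j ω from rfl] at h
    rw [h, hXmean j, hYmean j]
  have EXYS : ∀ j, ∫ ω, X j ω * Y j ω * S j ω ∂ℙ = γ j * (β₀ * γ j) * q j := by
    intro j
    have h := (hI1 j).integral_mul_eq_mul_integral (iXY j).1 (hSint j).1
    rw [show ((fun ω => X j ω * Y j ω) * S j) = fun ω => X j ω * Y j ω * S j ω from rfl] at h
    rw [h, EXY j, hSval j]
  have EYS : ∀ j, ∫ ω, Y j ω * S j ω ∂ℙ = β₀ * γ j * q j := by
    intro j
    have h := (hI4 j).integral_mul_eq_mul_integral (hYint j).1 (hSint j).1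
    rw [show (Y j * S j) = fun ω => Y j ω * S j ω from rfl] at h
    rw [h, hYmean j, hSval j]
  have EGS : ∀ j, ∫ ω, ((X j ω) ^ 2 - (σγ j) ^ 2) * S j ω ∂ℙ = (γ j) ^ 2 * q j := by
    intro j
    have h := (hI2 j).integral_mul_eq_mul_integral (iX2c j).1 (hSint j).1
    rw [show ((fun ω => (X j ω) ^ 2 - (σγ j) ^ 2) * S j)
        = fun ω => ((X j ω) ^ 2 - (σγ j) ^ 2) * S j ω from rfl] at h
    rw [h, hSval j, integral_sub (hXint2 j) (integrable_const _), hXm2 j]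
    simp [measure_univ]
  have EU : ∀ j, ∫ ω, (X j ω) ^ 3 - (σγ j) ^ 2 * X j ω ∂ℙ
      = (γ j) ^ 3 + 2 * γ j * (σγ j) ^ 2 := by
    intro j
    rw [integral_sub (hXint3 j) ((hXint1 j).const_mul _), hXm3 j, integral_const_mul, hXmean j]
    ring
  have EUYS : ∀ j, ∫ ω, ((X j ω) ^ 3 - (σγ j) ^ 2 * X j ω) * (Y j ω * S j ω) ∂ℙ
      = ((γ j) ^ 3 + 2 * γ j * (σγ j) ^ 2) * (β₀ * γ j * q j) := by
    intro j
    have h := (hI3 j).integral_mul_eq_mul_integral (iU j).1 (iYS j).1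
    rw [show ((fun ω => (X j ω) ^ 3 - (σγ j) ^ 2 * X j ω) * fun ω => Y j ω * S j ω)
        = fun ω => ((X j ω) ^ 3 - (σγ j) ^ 2 * X j ω) * (Y j ω * S j ω) from rfl] at h
    rw [h, EU j, EYS j]
  -- the summand functions
  set f : Fin p → Ω → ℝ := fun j ω => ((σΓ j) ^ 2)⁻¹ * (X j ω * Y j ω) * S j ω with hfdef
  set g : Fin p → Ω → ℝ := fun j ω => ((σΓ j) ^ 2)⁻¹ * ((X j ω) ^ 2 - (σγ j) ^ 2) * S j ω
    with hgdef
  have iF : ∀ j, Integrable (f j) ℙ := by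
    intro j
    have := ((iXYS j).const_mul (((σΓ j) ^ 2)⁻¹))
    exact this.congr (Filter.Eventually.of_forall fun ω => by simp [hfdef]; ring)
  have iG : ∀ j, Integrable (g j) ℙ := by
    intro j
    have := ((iG0 j).const_mul (((σΓ j) ^ 2)⁻¹))
    exact this.congr (Filter.Eventually.of_forall fun ω => by simp [hgdef]; ring)
  have hEf : ∀ j, ∫ ω, f j ω ∂ℙ = ((σΓ j) ^ 2)⁻¹ * (γ j * (β₀ * γ j) * q j) := by
    intro j
    rw [show (fun ω => f j ω) = fun ω => ((σΓ j) ^ 2)⁻¹ * (X j ω * Y j ω * S j ω) from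
      funext fun ω => by simp [hfdef]; ring]
    rw [integral_const_mul, EXYS j]
  have hEg : ∀ j, ∫ ω, g j ω ∂ℙ = ((σΓ j) ^ 2)⁻¹ * ((γ j) ^ 2 * q j) := by
    intro j
    rw [show (fun ω => g j ω) = fun ω => ((σΓ j) ^ 2)⁻¹ * (((X j ω) ^ 2 - (σγ j) ^ 2) * S j ω)
      from funext fun ω => by simp [hgdef]; ring]
    rw [integral_const_mul, EGS j]
  -- diagonal product
  have hdiagpt : ∀ j ω, f j ω * g j ω
      = (((σΓ j) ^ 2)⁻¹) ^ 2 * (((X j ω) ^ 3 - (σγ j) ^ 2 * X j ω) * (Y j ω * S j ω)) := by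
    intro j ω
    by_cases h : lam < |W j ω| / σstar j
    · simp only [hfdef, hgdef, hSdef, if_pos h]
      ring
    · simp only [hfdef, hgdef, hSdef, if_neg h]
      ring
  have iFGdiag : ∀ j, Integrable (fun ω => f j ω * g j ω) ℙ := by
    intro j
    have := (iUYS j).const_mul ((((σΓ j) ^ 2)⁻¹) ^ 2)
    exact this.congr (Filter.Eventually.of_forall fun ω => (hdiagpt j ω).symm)
  have hdiag : ∀ j, ∫ ω, f j ω * g j ω ∂ℙ
      = (((σΓ j) ^ 2)⁻¹) ^ 2 * (((γ j) ^ 3 + 2 * γ j * (σγ j) ^ 2) * (β₀ * γ j * q j)) := by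
    intro j
    rw [show (fun ω => f j ω * g j ω) = fun ω => (((σΓ j) ^ 2)⁻¹) ^ 2
        * (((X j ω) ^ 3 - (σγ j) ^ 2 * X j ω) * (Y j ω * S j ω)) from
      funext fun ω => hdiagpt j ω]
    rw [integral_const_mul, EUYS j]
  -- off-diagonal independence
  have hIfg : ∀ j k, j ≠ k → IndepFun (f j) (g k) ℙ := by
    intro j k hjk
    have hdisj : Disjoint
        ({Sum.inl j, Sum.inr (Sum.inl j), Sum.inr (Sum.inr j)} :
          Finset (Fin p ⊕ (Fin p ⊕ Fin p)))
        {Sum.inl k, Sum.inr (Sum.inl k), Sum.inr (Sum.inr k)} := by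
      simp only [Finset.disjoint_left, Finset.mem_insert, Finset.mem_singleton]
      rintro x (rfl | rfl | rfl) (h | h | h) <;> simp at h <;> exact hjk h
    have hbig := hindep.indepFun_finset _ _ hdisj hFmeas
    have hφ : Measurable (fun h : ({Sum.inl j, Sum.inr (Sum.inl j), Sum.inr (Sum.inr j)} :
        Finset (Fin p ⊕ (Fin p ⊕ Fin p))) → ℝ =>
        ((σΓ j) ^ 2)⁻¹ * (h ⟨Sum.inl j, by simp⟩ * h ⟨Sum.inr (Sum.inl j), by simp⟩)
          * Sf j (h ⟨Sum.inr (Sum.inr j), by simp⟩)) :=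
      meas_aux1 _ _ _ _ (hSfmeas j)
    have hψ : Measurable (fun h : ({Sum.inl k, Sum.inr (Sum.inl k), Sum.inr (Sum.inr k)} :
        Finset (Fin p ⊕ (Fin p ⊕ Fin p))) → ℝ =>
        ((σΓ k) ^ 2)⁻¹ * ((h ⟨Sum.inl k, by simp⟩) ^ 2 - (σγ k) ^ 2)
          * Sf k (h ⟨Sum.inr (Sum.inr k), by simp⟩)) :=
      meas_aux2 _ _ _ _ (hSfmeas k)
    exact hbig.comp hφ hψ
  have iFG : ∀ j k, Integrable (fun ω => f j ω * g k ω) ℙ := by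
    intro j k
    by_cases hjk : j = k
    · subst hjk; exact iFGdiag j
    · exact (hIfg j k hjk).integrable_mul (iF j) (iG k)
  have hoff : ∀ j k, j ≠ k → ∫ ω, f j ω * g k ω ∂ℙ = (∫ ω, f j ω ∂ℙ) * ∫ ω, g k ω ∂ℙ := by
    intro j k hjk
    have h := (hIfg j k hjk).integral_mul_eq_mul_integral (iF j).1 (iG k).1
    rw [show (f j * g k) = fun ω => f j ω * g k ω from rfl] at h
    exact h
  -- assemble
  have hgoalf : ∀ ω : Ω, (∑ j, ((σΓ j) ^ 2)⁻¹ * (X j ω * Y j ω)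
      * (if lam < |W j ω| / σstar j then (1:ℝ) else 0)) = ∑ j, f j ω := fun ω => rfl
  have hgoalg : ∀ ω : Ω, (∑ j, ((σΓ j) ^ 2)⁻¹ * ((X j ω) ^ 2 - (σγ j) ^ 2)
      * (if lam < |W j ω| / σstar j then (1:ℝ) else 0)) = ∑ j, g j ω := fun ω => rfl
  simp_rw [hgoalf, hgoalg]
  have T2 : ∫ ω, ∑ j, f j ω ∂ℙ = ∑ j, ∫ ω, f j ω ∂ℙ :=
    integral_finset_sum Finset.univ fun j _ => iF j
  have T3 : ∫ ω, ∑ j, g j ω ∂ℙ = ∑ j, ∫ ω, g j ω ∂ℙ :=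
    integral_finset_sum Finset.univ fun j _ => iG j
  have T1 : ∫ ω, (∑ j, f j ω) * (∑ j, g j ω) ∂ℙ
      = ∑ j, ∑ k, ∫ ω, f j ω * g k ω ∂ℙ := by
    have hpt : ∀ ω : Ω, (∑ j, f j ω) * (∑ j, g j ω) = ∑ j, ∑ k, f j ω * g k ω := fun ω => by
      rw [Finset.sum_mul_sum]
    simp_rw [hpt]
    rw [integral_finset_sum Finset.univ fun j _ =>
      integrable_finset_sum Finset.univ fun k _ => iFG j k]
    exact Finset.sum_congr rfl fun j _ =>
      integral_finset_sum Finset.univ fun k _ => iFG j k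
  rw [T1, T2, T3, Finset.sum_mul_sum, Finset.mul_sum, ← Finset.sum_sub_distrib]
  refine Finset.sum_congr rfl fun j _ => ?_
  rw [← Finset.sum_sub_distrib]
  rw [Finset.sum_eq_single j]
  · have hc : ((σΓ j) ^ 4)⁻¹ = (((σΓ j) ^ 2)⁻¹) ^ 2 := by
      have hne : σΓ j ≠ 0 := (hσΓ j).ne'
      field_simp
    rw [hdiag j, hEf j, hEg j, hc]
    ring
  · intro k _ hkj
    rw [hoff j k (fun h => hkj h.symm), sub_self]
  · intro h
    exact absurd (Finset.mem_univ j) h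

set_option maxHeartbeats 1000000 in
/-- with instrument selection, the covariance of the numerator and
denominator of the dIVW estimator equals
`β₀ ∑ j, σΓ j ⁻⁴ [2 σγ j ² γ j ² q j + γ j ⁴ q j (1 - q j)]`.
Covariance is expressed as `E[θ̂₁λ θ̂₂λ] - E[θ̂₁λ] E[θ̂₂λ]`. -/
theorem selected_num_denom_covariance
{Ω : Type*} [MeasureSpace Ω] [IsProbabilityMeasure (ℙ : Measure Ω)]
    (p : ℕ) (hp : 1 ≤ p) (γ : Fin p → ℝ) (β₀ : ℝ) (lam : ℝ) (hlam : 0 ≤ lam)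
    (σγ σΓ σstar : Fin p → ℝ)
    (hσγ : ∀ j, 0 < σγ j) (hσΓ : ∀ j, 0 < σΓ j) (hσstar : ∀ j, 0 < σstar j)
    (γhat Γhat γstar : Fin p → Ω → ℝ)
    (hindep : iIndepFun
      (Sum.elim γhat (Sum.elim Γhat γstar) : Fin p ⊕ (Fin p ⊕ Fin p) → Ω → ℝ) ℙ)
    (hγ : ∀ j, Measure.map (γhat j) ℙ = gaussianReal (γ j) ⟨(σγ j) ^ 2, sq_nonneg _⟩)
    (hΓ : ∀ j, Measure.map (Γhat j) ℙ = gaussianReal (β₀ * γ j) ⟨(σΓ j) ^ 2, sq_nonneg _⟩)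
    (hγstar : ∀ j, Measure.map (γstar j) ℙ
      = gaussianReal (γ j) ⟨(σstar j) ^ 2, sq_nonneg _⟩)
    -- selection indicators `s j ω = 1{|γ̂* j| / σ* j > λ}`
    (s : Fin p → Ω → ℝ)
    (hs : ∀ j ω, s j ω = if lam < |γstar j ω| / σstar j then 1 else 0)
    -- selection probabilities `q j = P(|γ̂* j| / σ* j > λ)`
    (q : Fin p → ℝ)
    (hq : ∀ j, q j = (ℙ {ω | lam < |γstar j ω| / σstar j}).toReal) :
    (∫ ω, (∑ j, ((σΓ j) ^ 2)⁻¹ * (γhat j ω * Γhat j ω) * s j ω)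
        * (∑ j, ((σΓ j) ^ 2)⁻¹ * ((γhat j ω) ^ 2 - (σγ j) ^ 2) * s j ω) ∂ℙ)
      - (∫ ω, ∑ j, ((σΓ j) ^ 2)⁻¹ * (γhat j ω * Γhat j ω) * s j ω ∂ℙ)
        * (∫ ω, ∑ j, ((σΓ j) ^ 2)⁻¹ * ((γhat j ω) ^ 2 - (σγ j) ^ 2) * s j ω ∂ℙ)
      = β₀ * ∑ j, ((σΓ j) ^ 4)⁻¹ *
          (2 * (σγ j) ^ 2 * (γ j) ^ 2 * q j + (γ j) ^ 4 * q j * (1 - q j)) := by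
  classical
  -- a.e. measurable versions
  have hγae : ∀ j, AEMeasurable (γhat j) ℙ := fun j => aemeasurable_of_map_eq_gaussian (hγ j)
  have hΓae : ∀ j, AEMeasurable (Γhat j) ℙ := fun j => aemeasurable_of_map_eq_gaussian (hΓ j)
  have hsae : ∀ j, AEMeasurable (γstar j) ℙ :=
    fun j => aemeasurable_of_map_eq_gaussian (hγstar j)
  set X' : Fin p → Ω → ℝ := fun j => (hγae j).mk (γhat j) with hX'def
  set Y' : Fin p → Ω → ℝ := fun j => (hΓae j).mk (Γhat j) with hY'def
  set W' : Fin p → Ω → ℝ := fun j => (hsae j).mk (γstar j) with hW'def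
  have hX'm : ∀ j, Measurable (X' j) := fun j => (hγae j).measurable_mk
  have hY'm : ∀ j, Measurable (Y' j) := fun j => (hΓae j).measurable_mk
  have hW'm : ∀ j, Measurable (W' j) := fun j => (hsae j).measurable_mk
  have hindep' : iIndepFun
      (Sum.elim X' (Sum.elim Y' W') : Fin p ⊕ (Fin p ⊕ Fin p) → Ω → ℝ) ℙ := by
    refine iIndepFun_congr_ae hindep ?_
    rintro (j | j | j)
    · exact (hγae j).ae_eq_mk
    · exact (hΓae j).ae_eq_mk
    · exact (hsae j).ae_eq_mk
  have hX' : ∀ j, Measure.map (X' j) ℙ = gaussianReal (γ j) ⟨(σγ j) ^ 2, sq_nonneg _⟩ := by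
    intro j
    rw [← Measure.map_congr (hγae j).ae_eq_mk]
    exact hγ j
  have hY' : ∀ j, Measure.map (Y' j) ℙ = gaussianReal (β₀ * γ j) ⟨(σΓ j) ^ 2, sq_nonneg _⟩ := by
    intro j
    rw [← Measure.map_congr (hΓae j).ae_eq_mk]
    exact hΓ j
  have hq' : ∀ j, q j = (ℙ {ω | lam < |W' j ω| / σstar j}).toReal := by
    intro j
    rw [hq j]
    congr 1
    apply measure_congr
    rw [Filter.eventuallyEq_set]
    filter_upwards [(hsae j).ae_eq_mk] with ω hω
    simp only [Set.mem_setOf_eq, hω]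
    rfl
  -- a.e. equality of the integrands
  have hae_all : ∀ᵐ ω ∂ℙ, ∀ j : Fin p,
      γhat j ω = X' j ω ∧ Γhat j ω = Y' j ω ∧ γstar j ω = W' j ω := by
    rw [MeasureTheory.ae_all_iff]
    intro j
    filter_upwards [(hγae j).ae_eq_mk, (hΓae j).ae_eq_mk, (hsae j).ae_eq_mk] with ω h1 h2 h3
    exact ⟨h1, h2, h3⟩
  have e1 : ∀ ω : Ω, (∀ j : Fin p,
      γhat j ω = X' j ω ∧ Γhat j ω = Y' j ω ∧ γstar j ω = W' j ω) →
      (∑ j, ((σΓ j) ^ 2)⁻¹ * (γhat j ω * Γhat j ω) * s j ω)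
        = ∑ j, ((σΓ j) ^ 2)⁻¹ * (X' j ω * Y' j ω)
            * (if lam < |W' j ω| / σstar j then (1:ℝ) else 0) := by
    intro ω h
    refine Finset.sum_congr rfl fun j _ => ?_
    rw [hs j ω, (h j).1, (h j).2.1, (h j).2.2]
  have e2 : ∀ ω : Ω, (∀ j : Fin p,
      γhat j ω = X' j ω ∧ Γhat j ω = Y' j ω ∧ γstar j ω = W' j ω) →
      (∑ j, ((σΓ j) ^ 2)⁻¹ * ((γhat j ω) ^ 2 - (σγ j) ^ 2) * s j ω)
        = ∑ j, ((σΓ j) ^ 2)⁻¹ * ((X' j ω) ^ 2 - (σγ j) ^ 2)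
            * (if lam < |W' j ω| / σstar j then (1:ℝ) else 0) := by
    intro ω h
    refine Finset.sum_congr rfl fun j _ => ?_
    rw [hs j ω, (h j).1, (h j).2.2]
  have h1 : ∫ ω, (∑ j, ((σΓ j) ^ 2)⁻¹ * (γhat j ω * Γhat j ω) * s j ω)
        * (∑ j, ((σΓ j) ^ 2)⁻¹ * ((γhat j ω) ^ 2 - (σγ j) ^ 2) * s j ω) ∂ℙ
      = ∫ ω, (∑ j, ((σΓ j) ^ 2)⁻¹ * (X' j ω * Y' j ω)
            * (if lam < |W' j ω| / σstar j then (1:ℝ) else 0))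
          * (∑ j, ((σΓ j) ^ 2)⁻¹ * ((X' j ω) ^ 2 - (σγ j) ^ 2)
            * (if lam < |W' j ω| / σstar j then (1:ℝ) else 0)) ∂ℙ := by
    apply integral_congr_ae
    filter_upwards [hae_all] with ω h
    rw [e1 ω h, e2 ω h]
  have h2 : ∫ ω, ∑ j, ((σΓ j) ^ 2)⁻¹ * (γhat j ω * Γhat j ω) * s j ω ∂ℙ
      = ∫ ω, ∑ j, ((σΓ j) ^ 2)⁻¹ * (X' j ω * Y' j ω)
          * (if lam < |W' j ω| / σstar j then (1:ℝ) else 0) ∂ℙ := by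
    apply integral_congr_ae
    filter_upwards [hae_all] with ω h
    exact e1 ω h
  have h3 : ∫ ω, ∑ j, ((σΓ j) ^ 2)⁻¹ * ((γhat j ω) ^ 2 - (σγ j) ^ 2) * s j ω ∂ℙ
      = ∫ ω, ∑ j, ((σΓ j) ^ 2)⁻¹ * ((X' j ω) ^ 2 - (σγ j) ^ 2)
          * (if lam < |W' j ω| / σstar j then (1:ℝ) else 0) ∂ℙ := by
    apply integral_congr_ae
    filter_upwards [hae_all] with ω h
    exact e2 ω h
  rw [h1, h2, h3]
  exact aux_cov p γ β₀ lam σγ σΓ σstar hσγ hσΓ X' Y' W' hX'm hY'm hW'm hindep' hX' hY' q hq'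
end
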